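/- arXiv:2303.02873 — 9 statements merged into one kernel-verified Lean document; each statement's English description precedes it below -/
import Mathlib

section
/- Let m > 1 and Φ_m(t) = exp(((ln t)^{1/m} + 1)^m) for t > 1. Then Φ_m is submultiplicative on (1, ∞): Φ_m(ab) ≤ Φ_m(a) Φ_m(b) for all a, b > 1. -/
/-!
With `s = log a` and `t = log b` the claim is the subadditivity of `f s = (s ^ (1/m) + 1) ^ m`
on `(0, ∞)`. Write `s = u ^ m`, `t = v ^ m` with `v ≤ u`. Jensen's inequality for `x ↦ x ^ m`
with weights proportional to `u` and `1` gives
`f (s + t) ≤ (u + 1) ^ m + v * (v (u + 1) / u) ^ (m - 1)`,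
and `v (u + 1) / u ≤ v + 1` bounds the last term by `(v + 1) ^ m`.
-/

open Real

lemma add_rpow_le_mul_weighted_rpow_add_rpow {a b x y m : ℝ} (ha : 0 < a) (hb : 0 < b)
    (hx : 0 ≤ x) (hy : 0 ≤ y) (hm : 1 ≤ m) :
    (x + y) ^ m ≤ (a + b) ^ (m - 1) * (a * (x / a) ^ m + b * (y / b) ^ m) := by
  have hab : 0 < a + b := add_pos ha hb
  have jensen := (convexOn_rpow hm).2 (Set.mem_Ici.2 (div_nonneg hx ha.le))
    (Set.mem_Ici.2 (div_nonneg hy hb.le)) (div_nonneg ha.le hab.le) (div_nonneg hb.le hab.le)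
    (by field_simp)
  have hmean : a / (a + b) * (x / a) + b / (a + b) * (y / b) = (x + y) / (a + b) := by
    field_simp
  simp only [smul_eq_mul, hmean] at jensen
  calc (x + y) ^ m = (a + b) ^ m * ((x + y) / (a + b)) ^ m := by
        rw [div_rpow (by positivity) hab.le, mul_div_cancel₀ _ (by positivity)]
    _ ≤ (a + b) ^ m * (a / (a + b) * (x / a) ^ m + b / (a + b) * (y / b) ^ m) := by gcongr
    _ = (a + b) ^ (m - 1) * (a * (x / a) ^ m + b * (y / b) ^ m) := by
        rw [rpow_sub_one hab.ne']
        field_simp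

lemma rpow_add_rpow_rpow_one_div_add_one_rpow_le {m u v : ℝ} (hm : 1 ≤ m) (hv : 0 < v)
    (hvu : v ≤ u) :
    ((u ^ m + v ^ m) ^ (1 / m) + 1) ^ m ≤ (u + 1) ^ m + (v + 1) ^ m := by
  have hu : 0 < u := hv.trans_le hvu
  set A := (u ^ m + v ^ m) ^ (1 / m) with hA_def
  have hA : A ^ m = u ^ m + v ^ m := by
    rw [hA_def, one_div, rpow_inv_rpow (by positivity) (by linarith)]
  have hAu : u * (A / u) ^ m = u + v * (v / u) ^ (m - 1) := by
    rw [div_rpow (by positivity) hu.le, hA, rpow_sub_one (by positivity), div_rpow hv.le hu.le]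
    field_simp
  have hratio : (u + 1) * (v / u) ≤ v + 1 := by
    rw [mul_div_assoc', div_le_iff₀ hu]
    nlinarith
  calc ((u ^ m + v ^ m) ^ (1 / m) + 1) ^ m
      ≤ (u + 1) ^ (m - 1) * (u * (A / u) ^ m + 1 * (1 / 1) ^ m) :=
        add_rpow_le_mul_weighted_rpow_add_rpow hu one_pos (by positivity) zero_le_one hm
    _ = (u + 1) ^ m + v * ((u + 1) * (v / u)) ^ (m - 1) := by
        rw [hAu, mul_rpow (by positivity) (by positivity), rpow_sub_one (by positivity)]
        simp only [div_one, one_rpow, mul_one]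
        field_simp
        ring
    _ ≤ (u + 1) ^ m + v * (v + 1) ^ (m - 1) := by gcongr
    _ ≤ (u + 1) ^ m + (v + 1) * (v + 1) ^ (m - 1) := by gcongr; linarith
    _ = (u + 1) ^ m + (v + 1) ^ m := by
        rw [rpow_sub_one (by positivity), mul_div_cancel₀ _ (by positivity)]

lemma rpow_add_one_div_add_one_rpow_le {m s t : ℝ} (hm : 1 ≤ m) (hs : 0 < s) (ht : 0 < t) :
    ((s + t) ^ (1 / m) + 1) ^ m ≤ (s ^ (1 / m) + 1) ^ m + (t ^ (1 / m) + 1) ^ m := by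
  wlog hts : t ≤ s generalizing s t
  · rw [add_comm s t, add_comm ((s ^ (1 / m) + 1) ^ m)]
    exact this ht hs (le_of_not_ge hts)
  have hroot : ∀ r : ℝ, 0 ≤ r → (r ^ (1 / m)) ^ m = r := fun r hr ↦ by
    rw [one_div, rpow_inv_rpow hr (by positivity)]
  have h := rpow_add_rpow_rpow_one_div_add_one_rpow_le hm (rpow_pos_of_pos ht (1 / m))
    (rpow_le_rpow ht.le hts (by positivity))
  rwa [hroot s hs.le, hroot t ht.le] at h

/-- For m > 1, Φ_m(t) = exp(((ln t)^{1/m}+1)^m) is submultiplicative on (1,∞). -/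
theorem phi_submultiplicative (m : ℝ) (hm : 1 < m) (a b : ℝ) (ha : 1 < a) (hb : 1 < b) :
    Real.exp ((Real.log (a * b) ^ (1 / m) + 1) ^ m) ≤
      Real.exp ((Real.log a ^ (1 / m) + 1) ^ m) *
        Real.exp ((Real.log b ^ (1 / m) + 1) ^ m) := by
  rw [← exp_add, exp_le_exp, log_mul (by positivity) (by positivity)]
  exact rpow_add_one_div_add_one_rpow_le hm.le (log_pos ha) (log_pos hb)
end

section
/- Let Φ be a Young function (increasing, convex, Φ(0)=0) that is K-submultiplicative for K ≥ 1, and let (X, μ) be a measure space. Define the nonhomogeneous quasi-norm ‖f‖_{D^Φ(μ)} = Φ^{-1}(∫_X Φ(|f|) dμ) for measurable f with finite integral. Then for all such f, g: ‖f+g‖_{D^Φ(μ)} ≤ 2KΦ(2) (‖f‖_{D^Φ(μ)} + ‖g‖_{D^Φ(μ)}). -/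
/-!
Pointwise, `|f + g| ≤ 2 max (|f|, |g|)` and submultiplicativity give
`Φ |f + g| ≤ K Φ(2) (Φ |f| + Φ |g|)`, so after integrating and writing `∫ Φ |f| = Φ a`,
`∫ Φ |g| = Φ b`, the integral of `Φ |f + g|` is at most `2 K Φ(2) Φ(a + b)`. Convexity with
`Φ 0 = 0` moves the factor `2 K Φ(2) ≥ 1` inside `Φ`, and applying the monotone inverse `Ψ`
gives the bound `2 K Φ(2) (a + b)`.
-/

open MeasureTheory Set

section YoungFunction

variable {Φ : ℝ → ℝ} {K : ℝ}

theorem ConvexOn.mul_le_map_mul (hconv : ConvexOn ℝ (Ici 0) Φ) (hΦ0 : Φ 0 = 0) {c t : ℝ}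
    (hc : 1 ≤ c) (ht : 0 ≤ t) : c * Φ t ≤ Φ (c * t) := by
  have hc0 : 0 < c := zero_lt_one.trans_le hc
  have h := hconv.2 (x := c * t) (y := 0) (mem_Ici.2 (by positivity)) (mem_Ici.2 le_rfl)
    (inv_nonneg.2 hc0.le) (sub_nonneg.2 (inv_le_one_of_one_le₀ hc)) (add_sub_cancel _ _)
  simp only [smul_eq_mul, inv_mul_cancel_left₀ hc0.ne', hΦ0, mul_zero, add_zero] at h
  exact (le_inv_mul_iff₀ hc0).1 h

theorem one_le_mul_map_two (hsm : StrictMonoOn Φ (Ici 0)) (hΦ0 : Φ 0 = 0) (hK : 0 ≤ K)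
    (hsub : ∀ s t : ℝ, 0 ≤ s → 0 ≤ t → Φ (s * t) ≤ K * Φ s * Φ t) : 1 ≤ K * Φ 2 := by
  have hΦ1 : 0 < Φ 1 := hΦ0 ▸ hsm (mem_Ici.2 le_rfl) (mem_Ici.2 zero_le_one) zero_lt_one
  have hKΦ1 : 1 ≤ K * Φ 1 := by
    have h := hsub 1 1 zero_le_one zero_le_one
    rw [one_mul] at h
    exact (le_mul_iff_one_le_left hΦ1).1 h
  have hΦ12 : Φ 1 ≤ Φ 2 :=
    hsm.monotoneOn (mem_Ici.2 zero_le_one) (mem_Ici.2 zero_le_two) one_le_two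
  exact hKΦ1.trans (mul_le_mul_of_nonneg_left hΦ12 hK)

theorem map_abs_add_le (hmono : MonotoneOn Φ (Ici 0)) (hΦnn : ∀ t : ℝ, 0 ≤ t → 0 ≤ Φ t)
    (hK : 0 ≤ K) (hsub : ∀ s t : ℝ, 0 ≤ s → 0 ≤ t → Φ (s * t) ≤ K * Φ s * Φ t) (x y : ℝ) :
    Φ |x + y| ≤ K * Φ 2 * (Φ |x| + Φ |y|) := by
  set m := max |x| |y| with hm_def
  have hm : 0 ≤ m := (abs_nonneg x).trans (le_max_left _ _)
  have hxy : |x + y| ≤ 2 * m := by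
    linarith [abs_add_le x y, le_max_left |x| |y|, le_max_right |x| |y|]
  have hΦm : Φ m ≤ Φ |x| + Φ |y| := by
    rcases max_cases |x| |y| with ⟨h, _⟩ | ⟨h, _⟩ <;> rw [hm_def, h]
    · linarith [hΦnn |y| (abs_nonneg y)]
    · linarith [hΦnn |x| (abs_nonneg x)]
  calc Φ |x + y| ≤ Φ (2 * m) := hmono (mem_Ici.2 (abs_nonneg _)) (mem_Ici.2 (by positivity)) hxy
    _ ≤ K * Φ 2 * Φ m := hsub 2 m zero_le_two hm
    _ ≤ K * Φ 2 * (Φ |x| + Φ |y|) :=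
      mul_le_mul_of_nonneg_left hΦm (mul_nonneg hK (hΦnn 2 zero_le_two))

end YoungFunction

/-- The nonhomogeneous quantity ‖f‖ = Φ⁻¹(∫ Φ(|f|) dμ) is a quasi-norm: it satisfies a
quasi-triangle inequality with constant 2KΦ(2), where Φ is a K-submultiplicative Young
function with inverse Ψ on [0,∞). -/
theorem quasinorm_triangle {X : Type*} [MeasurableSpace X] (μ : Measure X)
    (Φ Ψ : ℝ → ℝ) (K : ℝ) (hK : 1 ≤ K)
    (hΦ0 : Φ 0 = 0)
    (hsm : StrictMonoOn Φ (Set.Ici 0))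
    (hconv : ConvexOn ℝ (Set.Ici 0) Φ)
    (hΦnn : ∀ t : ℝ, 0 ≤ t → 0 ≤ Φ t)
    (hsurj : ∀ s : ℝ, 0 ≤ s → ∃ t : ℝ, 0 ≤ t ∧ Φ t = s)
    (hΨ : ∀ t : ℝ, 0 ≤ t → Ψ (Φ t) = t)
    (hΨmono : MonotoneOn Ψ (Set.Ici 0))
    (hsub : ∀ s t : ℝ, 0 ≤ s → 0 ≤ t → Φ (s * t) ≤ K * Φ s * Φ t)
    (f g : X → ℝ)
    (hf : Integrable (fun x => Φ |f x|) μ)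
    (hg : Integrable (fun x => Φ |g x|) μ)
    (hfg : Integrable (fun x => Φ |f x + g x|) μ) :
    Ψ (∫ x, Φ |f x + g x| ∂μ) ≤
      2 * K * Φ 2 * (Ψ (∫ x, Φ |f x| ∂μ) + Ψ (∫ x, Φ |g x| ∂μ)) := by
  have hK0 : 0 ≤ K := zero_le_one.trans hK
  have hmono := hsm.monotoneOn
  have hint_nonneg (h : X → ℝ) : 0 ≤ ∫ x, Φ |h x| ∂μ :=
    integral_nonneg fun x => hΦnn _ (abs_nonneg _)
  set C := K * Φ 2
  have hC : 1 ≤ 2 * C := by linarith [one_le_mul_map_two hsm hΦ0 hK0 hsub]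
  obtain ⟨a, ha, hfa⟩ := hsurj _ (hint_nonneg f)
  obtain ⟨b, hb, hgb⟩ := hsurj _ (hint_nonneg g)
  have hab : 0 ≤ a + b := add_nonneg ha hb
  have hbound : ∫ x, Φ |f x + g x| ∂μ ≤ Φ (2 * C * (a + b)) :=
    calc ∫ x, Φ |f x + g x| ∂μ ≤ ∫ x, C * (Φ |f x| + Φ |g x|) ∂μ :=
          integral_mono hfg ((hf.add hg).const_mul C)
            fun x => map_abs_add_le hmono hΦnn hK0 hsub (f x) (g x)
      _ = C * (Φ a + Φ b) := by rw [integral_const_mul, integral_add hf hg, hfa, hgb]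
      _ ≤ C * (Φ (a + b) + Φ (a + b)) := by
          refine mul_le_mul_of_nonneg_left (add_le_add ?_ ?_) (by linarith)
          · exact hmono (mem_Ici.2 ha) (mem_Ici.2 hab) (le_add_of_nonneg_right hb)
          · exact hmono (mem_Ici.2 hb) (mem_Ici.2 hab) (le_add_of_nonneg_left ha)
      _ = 2 * C * Φ (a + b) := by ring
      _ ≤ Φ (2 * C * (a + b)) := hconv.mul_le_map_mul hΦ0 hC hab
  calc Ψ (∫ x, Φ |f x + g x| ∂μ) ≤ Ψ (Φ (2 * C * (a + b))) :=
        hΨmono (mem_Ici.2 (hint_nonneg _)) (mem_Ici.2 (hΦnn _ (by positivity))) hbound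
    _ = 2 * C * (Ψ (Φ a) + Ψ (Φ b)) := by rw [hΨ _ (by positivity), hΨ a ha, hΨ b hb]
    _ = _ := by rw [hfa, hgb]; ring
end

section
/- Let Φ be a Young function that is K-supermultiplicative for some K ≥ 1 (i.e., K Φ(st) ≥ Φ(s)Φ(t) for all s, t ≥ 0), and let μ be a probability measure on B. For any nonnegative measurable v on B, ‖v‖_{L^Φ(μ)} ≤ K Φ^{-1}(∫_B Φ(v) dμ). -/
open MeasureTheory

/-- The Luxemburg norm of v: inf { t > 0 : ∫ Φ(|v|/t) dμ ≤ 1 }, with inf ∅ = ∞. -/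
noncomputable def luxemburgNorm {X : Type*} [MeasurableSpace X] (μ : Measure X)
    (Φ : ℝ → ℝ) (v : X → ℝ) : ENNReal :=
  sInf {t : ENNReal | 0 < t ∧ t ≠ ⊤ ∧ ∫ x, Φ (|v x| / t.toReal) ∂μ ≤ 1}

/-!
Write `∫ Φ(v) dμ = Φ(s)`. For `t > K s`, supermultiplicativity and the convexity bound
`K Φ(u / K) ≤ Φ(u)` give `Φ(u / t) Φ(t / K) ≤ K Φ(u / K) ≤ Φ(u)` pointwise, and `Φ(t / K) > Φ(s)`,
so `∫ Φ(v / t) dμ ≤ Φ(s) / Φ(t / K) ≤ 1`: every `t > K s` is admissible in the Luxemburg norm.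
When `Φ ∘ v` is not integrable, neither is `Φ(v / t)` for `t ≤ 1`, so both Bochner integrals take
the junk value `0` and the Luxemburg norm is `0`.
-/

open Filter Set Topology

section Young

variable {Φ : ℝ → ℝ}

lemma ConvexOn.mul_map_div_le (hconv : ConvexOn ℝ (Ici 0) Φ) (hΦ0 : Φ 0 = 0) {K u : ℝ}
    (hK : 1 ≤ K) (hu : 0 ≤ u) : K * Φ (u / K) ≤ Φ u := by
  have hKpos : 0 < K := zero_lt_one.trans_le hK
  have h := hconv.2 (mem_Ici.2 hu) (mem_Ici.2 le_rfl) (inv_nonneg.2 hKpos.le)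
    (sub_nonneg.2 (inv_le_one_of_one_le₀ hK)) (add_sub_cancel _ _)
  simp only [smul_eq_mul, mul_zero, add_zero, hΦ0] at h
  rw [div_eq_inv_mul]
  calc K * Φ (K⁻¹ * u) ≤ K * (K⁻¹ * Φ u) := mul_le_mul_of_nonneg_left h hKpos.le
    _ = Φ u := by field_simp

lemma map_div_mul_map_div_le (hconv : ConvexOn ℝ (Ici 0) Φ) (hΦ0 : Φ 0 = 0) {K : ℝ}
    (hK : 1 ≤ K) (hsuper : ∀ s t : ℝ, 0 ≤ s → 0 ≤ t → Φ s * Φ t ≤ K * Φ (s * t))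
    {t u : ℝ} (ht : 0 < t) (hu : 0 ≤ u) : Φ (u / t) * Φ (t / K) ≤ Φ u := by
  have hKpos : 0 < K := zero_lt_one.trans_le hK
  calc Φ (u / t) * Φ (t / K) ≤ K * Φ (u / t * (t / K)) :=
        hsuper _ _ (div_nonneg hu ht.le) (div_nonneg ht.le hKpos.le)
    _ = K * Φ (u / K) := by rw [div_mul_div_cancel₀ ht.ne']
    _ ≤ Φ u := hconv.mul_map_div_le hΦ0 hK hu

lemma measurable_comp_abs_of_monotoneOn (hΦ : MonotoneOn Φ (Ici 0)) :
    Measurable fun t => Φ |t| := by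
  have hmono : Monotone fun t => Φ (max t 0) := fun a b hab =>
    hΦ (le_max_right a 0) (le_max_right b 0) (max_le_max_right 0 hab)
  simpa only [Function.comp_def, abs_nonneg, max_eq_left] using
    hmono.measurable.comp measurable_abs

end Young

section Luxemburg

variable {X : Type*} [MeasurableSpace X] {μ : Measure X} {Φ : ℝ → ℝ} {v : X → ℝ}

lemma luxemburgNorm_le_ofReal {t : ℝ} (ht : 0 < t) (h : ∫ x, Φ (|v x| / t) ∂μ ≤ 1) :
    luxemburgNorm μ Φ v ≤ ENNReal.ofReal t :=
  sInf_le ⟨ENNReal.ofReal_pos.2 ht, ENNReal.ofReal_ne_top, by rwa [ENNReal.toReal_ofReal ht.le]⟩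

lemma luxemburgNorm_le_ofReal_of_eventually {t₀ : ℝ} (ht₀ : 0 ≤ t₀)
    (h : ∀ᶠ t in 𝓝[>] t₀, ∫ x, Φ (|v x| / t) ∂μ ≤ 1) :
    luxemburgNorm μ Φ v ≤ ENNReal.ofReal t₀ := by
  refine ge_of_tendsto (x := 𝓝[>] t₀) ((ENNReal.continuous_ofReal.tendsto t₀).mono_left nhdsWithin_le_nhds) ?_
  filter_upwards [h, self_mem_nhdsWithin] with t ht (htt₀ : t₀ < t)
  exact luxemburgNorm_le_ofReal (ht₀.trans_lt htt₀) ht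

lemma integral_div_le_one_of_supermul (hconv : ConvexOn ℝ (Ici 0) Φ) (hΦ0 : Φ 0 = 0)
    (hΦnn : ∀ t, 0 ≤ t → 0 ≤ Φ t) {K : ℝ} (hK : 1 ≤ K)
    (hsuper : ∀ s t : ℝ, 0 ≤ s → 0 ≤ t → Φ s * Φ t ≤ K * Φ (s * t))
    (hI : Integrable (fun x => Φ |v x|) μ) {t : ℝ} (ht : 0 < t)
    (hpos : 0 < Φ (t / K)) (hle : ∫ x, Φ |v x| ∂μ ≤ Φ (t / K)) :
    ∫ x, Φ (|v x| / t) ∂μ ≤ 1 := by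
  have hpt : ∀ x, Φ (|v x| / t) ≤ Φ |v x| / Φ (t / K) := fun x =>
    (le_div_iff₀ hpos).2 (map_div_mul_map_div_le hconv hΦ0 hK hsuper ht (abs_nonneg _))
  calc ∫ x, Φ (|v x| / t) ∂μ ≤ ∫ x, Φ |v x| / Φ (t / K) ∂μ :=
        integral_mono_of_nonneg (ae_of_all _ fun x => hΦnn _ (by positivity)) (hI.div_const _)
          (ae_of_all _ hpt)
    _ = (∫ x, Φ |v x| ∂μ) / Φ (t / K) := integral_div _ _
    _ ≤ 1 := div_le_one_of_le₀ hle hpos.le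

lemma not_integrable_div_of_not_integrable (hmono : MonotoneOn Φ (Ici 0))
    (hΦnn : ∀ t, 0 ≤ t → 0 ≤ Φ t) (hmeas : AEStronglyMeasurable (fun x => Φ |v x|) μ)
    (hI : ¬Integrable (fun x => Φ |v x|) μ) {t : ℝ} (ht : 0 < t) (ht1 : t ≤ 1) :
    ¬Integrable (fun x => Φ (|v x| / t)) μ := fun hint =>
  hI <| hint.mono' hmeas <| ae_of_all _ fun x => by
    rw [Real.norm_eq_abs, abs_of_nonneg (hΦnn _ (abs_nonneg _))]
    exact hmono (mem_Ici.2 (abs_nonneg _)) (mem_Ici.2 (by positivity)) (le_div_self (abs_nonneg _) ht ht1)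

end Luxemburg

theorem luxemburg_le_quasinorm_general {X : Type*} [MeasurableSpace X] (μ : Measure X)
    (Φ Ψ : ℝ → ℝ) (K : ℝ) (hK : 1 ≤ K)
    (hΦ0 : Φ 0 = 0)
    (hsm : StrictMonoOn Φ (Set.Ici 0))
    (hconv : ConvexOn ℝ (Set.Ici 0) Φ)
    (hsurj : ∀ s : ℝ, 0 ≤ s → ∃ t : ℝ, 0 ≤ t ∧ Φ t = s)
    (hΨ : ∀ t : ℝ, 0 ≤ t → Ψ (Φ t) = t)
    (hsuper : ∀ s t : ℝ, 0 ≤ s → 0 ≤ t → Φ s * Φ t ≤ K * Φ (s * t))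
    (v : X → ℝ) (hv : Measurable v) (hvnn : ∀ x, 0 ≤ v x) :
    luxemburgNorm μ Φ v ≤ ENNReal.ofReal (K * Ψ (∫ x, Φ (v x) ∂μ)) := by
  have hΦnn : ∀ t, 0 ≤ t → 0 ≤ Φ t := fun t ht => hΦ0 ▸ hsm.monotoneOn self_mem_Ici ht ht
  have hKpos : 0 < K := zero_lt_one.trans_le hK
  have habs : (fun x => Φ (v x)) = fun x => Φ |v x| := by simp only [abs_of_nonneg (hvnn _)]
  rw [habs]
  by_cases hI : Integrable (fun x => Φ |v x|) μ
  · obtain ⟨s, hs, hsI⟩ := hsurj _ (integral_nonneg fun x => hΦnn _ (abs_nonneg (v x)))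
    rw [← hsI, hΨ s hs]
    refine luxemburgNorm_le_ofReal_of_eventually (by positivity) ?_
    filter_upwards [self_mem_nhdsWithin] with t (ht : K * s < t)
    have ht0 : 0 < t := (mul_nonneg hKpos.le hs).trans_lt ht
    have hlt : Φ s < Φ (t / K) :=
      hsm hs (mem_Ici.2 (by positivity)) ((lt_div_iff₀' hKpos).2 ht)
    exact integral_div_le_one_of_supermul hconv hΦ0 hΦnn hK hsuper hI ht0
      ((hΦnn s hs).trans_lt hlt) (hsI ▸ hlt.le)
  · rw [integral_undef hI, ← hΦ0, hΨ 0 le_rfl, mul_zero]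
    have hmeas : AEStronglyMeasurable (fun x => Φ |v x|) μ :=
      ((measurable_comp_abs_of_monotoneOn hsm.monotoneOn).comp hv).aestronglyMeasurable
    refine luxemburgNorm_le_ofReal_of_eventually le_rfl ?_
    filter_upwards [Ioc_mem_nhdsGT zero_lt_one] with t ⟨ht, ht1⟩
    rw [integral_undef (not_integrable_div_of_not_integrable hsm.monotoneOn hΦnn hmeas hI ht ht1)]
    exact zero_le_one

/-- If Φ is a K-supermultiplicative Young function and μ a probability measure, then
‖v‖_{L^Φ(μ)} ≤ K Φ⁻¹(∫ Φ(v) dμ). -/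
theorem luxemburg_le_quasinorm {X : Type*} [MeasurableSpace X] (μ : Measure X)
    [IsProbabilityMeasure μ]
    (Φ Ψ : ℝ → ℝ) (K : ℝ) (hK : 1 ≤ K)
    (hΦ0 : Φ 0 = 0)
    (hsm : StrictMonoOn Φ (Set.Ici 0))
    (hconv : ConvexOn ℝ (Set.Ici 0) Φ)
    (hΦnn : ∀ t : ℝ, 0 ≤ t → 0 ≤ Φ t)
    (hsurj : ∀ s : ℝ, 0 ≤ s → ∃ t : ℝ, 0 ≤ t ∧ Φ t = s)
    (hΨ : ∀ t : ℝ, 0 ≤ t → Ψ (Φ t) = t)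
    (hsuper : ∀ s t : ℝ, 0 ≤ s → 0 ≤ t → Φ s * Φ t ≤ K * Φ (s * t))
    (v : X → ℝ) (hv : Measurable v) (hvnn : ∀ x, 0 ≤ v x) :
    luxemburgNorm μ Φ v ≤ ENNReal.ofReal (K * Ψ (∫ x, Φ (v x) ∂μ)) :=
  luxemburg_le_quasinorm_general μ Φ Ψ K hK hΦ0 hsm hconv hsurj hΨ hsuper v hv hvnn
end

section
/- Fix m > 2, K > 1, γ > 0. Let Φ(t) = exp(((ln t)^{1/m} + 1)^m) for t ≥ e^{2^m}. Define a sequence by b_1 ≥ e^{2^m} and b_{n+1} = Φ(K n^γ b_n). Then there exists a constant C* = exp(((ln b_1)^{1/m} + C_m(γ + ln K))^m), where C_m depends only on m, such that Φ^{(n-1)}(C*) ≥ b_n for every positive integer n, where Φ^{(j)} denotes the j-fold composition of Φ. -/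
/-!
Write `b_n = exp (r_n ^ m)`. Then `Φ` advances `r` by exactly `1`, while the recurrence
advances it to `(r_n ^ m + log (K n^γ)) ^ (1/m) + 1`. By the tangent-line (Bernoulli) bound
`u ^ m + m u^(m-1) δ ≤ (u + δ) ^ m`, the extra increment is at most `δ` as soon as
`log (K n^γ) ≤ m u^(m-1) δ`. Since `r_n ≥ n + 1` and `log (K n^γ) = O((γ + log K) n^s)` for
`s = (m - 2)/2`, one may take `δ_n = D (n^(-s) - (n+1)^(-s))` with `D = C_m (γ + log K)`; these
telescope, so `r_n ≤ r_1 + D (1 - n^(-s)) + (n - 1) ≤ r_1 + D + (n - 1)`, the exponent of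
`Φ^[n-1] (exp ((r_1 + D) ^ m))`.
-/

/-- The Young function Φ_m(t) = exp(((ln t)^{1/m}+1)^m). -/
noncomputable def PhiM (m : ℝ) (t : ℝ) : ℝ :=
  Real.exp ((Real.log t ^ (1 / m) + 1) ^ m)

open Real

lemma PhiM_exp_rpow {m a : ℝ} (hm : m ≠ 0) (ha : 0 ≤ a) :
    PhiM m (exp (a ^ m)) = exp ((a + 1) ^ m) := by
  rw [PhiM, log_exp, ← rpow_mul ha, mul_one_div_cancel hm, rpow_one]

lemma iterate_PhiM_exp_rpow {m : ℝ} (hm : m ≠ 0) (k : ℕ) {a : ℝ} (ha : 0 ≤ a) :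
    (PhiM m)^[k] (exp (a ^ m)) = exp ((a + k) ^ m) := by
  induction k generalizing a with
  | zero => simp
  | succ k ih =>
    rw [Function.iterate_succ_apply, PhiM_exp_rpow hm ha, ih (by positivity)]
    push_cast
    ring_nf

lemma one_le_PhiM {m t : ℝ} (ht : 1 ≤ t) : 1 ≤ PhiM m t :=
  one_le_exp (rpow_nonneg (add_nonneg (rpow_nonneg (log_nonneg ht) _) zero_le_one) m)

lemma monotoneOn_PhiM {m : ℝ} (hm : 0 ≤ m) : MonotoneOn (PhiM m) (Set.Ici 1) := by
  intro t (ht : 1 ≤ t) t' _ htt'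
  have hlog : 0 ≤ log t := log_nonneg ht
  unfold PhiM
  gcongr

lemma exp_rpow_rpow_one_div_log {m t : ℝ} (hm : m ≠ 0) (ht : 1 ≤ t) :
    exp ((log t ^ (1 / m)) ^ m) = t := by
  rw [one_div, rpow_inv_rpow (log_nonneg ht) hm, exp_log (zero_lt_one.trans_le ht)]

lemma le_rpow_one_div_log {m a t : ℝ} (hm : 0 < m) (ha : 0 ≤ a) (ht : exp (a ^ m) ≤ t) :
    a ≤ log t ^ (1 / m) := by
  rw [one_div, le_rpow_inv_iff_of_pos ha ((rpow_nonneg ha m).trans ?_) hm] <;>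
    rwa [← exp_le_exp, exp_log ((exp_pos _).trans_le ht)]

lemma one_add_mul_log_le_rpow {y : ℝ} (hy : 0 < y) (s : ℝ) : 1 + s * log y ≤ y ^ s := by
  simpa [rpow_def_of_pos hy, mul_comm, add_comm] using add_one_le_exp (s * log y)

lemma one_add_log_le_mul_rpow {s x : ℝ} (hs : 0 < s) (hx : 1 ≤ x) :
    1 + log x ≤ (1 + 1 / s) * x ^ s := by
  have h1 : 1 ≤ x ^ s := one_le_rpow hx hs.le
  have h2 : log x ≤ x ^ s / s := log_le_rpow_div (by linarith) hs
  calc 1 + log x ≤ x ^ s + x ^ s / s := by linarith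
    _ = (1 + 1 / s) * x ^ s := by ring

lemma log_mul_rpow_le {K γ s x : ℝ} (hK : 1 ≤ K) (hγ : 0 ≤ γ) (hs : 0 < s) (hx : 1 ≤ x) :
    log (K * x ^ γ) ≤ (γ + log K) * (1 + 1 / s) * x ^ s := by
  have hlogK : 0 ≤ log K := log_nonneg hK
  have hlogx : 0 ≤ log x := log_nonneg hx
  rw [log_mul (by positivity) (rpow_pos_of_pos (by linarith) γ).ne', log_rpow (by linarith),
    mul_assoc]
  calc log K + γ * log x ≤ (γ + log K) * (1 + log x) := by nlinarith
    _ ≤ (γ + log K) * ((1 + 1 / s) * x ^ s) := by gcongr; exact one_add_log_le_mul_rpow hs hx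

lemma mul_rpow_neg_le_rpow_neg_sub {s x : ℝ} (hs : 0 ≤ s) (hx : 0 < x) :
    s * (x + 1) ^ (-(s + 1)) ≤ x ^ (-s) - (x + 1) ^ (-s) := by
  have hx1 : 0 < x + 1 := by linarith
  have hlog : 1 / (x + 1) ≤ log ((x + 1) / x) := by
    have h := one_sub_inv_le_log_of_pos (div_pos hx1 hx)
    rwa [inv_div, show 1 - x / (x + 1) = 1 / (x + 1) by field_simp; ring] at h
  have hratio : 1 + s / (x + 1) ≤ ((x + 1) / x) ^ s :=
    calc 1 + s / (x + 1) = 1 + s * (1 / (x + 1)) := by ring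
      _ ≤ 1 + s * log ((x + 1) / x) := by gcongr
      _ ≤ ((x + 1) / x) ^ s := one_add_mul_log_le_rpow (div_pos hx1 hx) s
  have hsplit : x ^ (-s) = (x + 1) ^ (-s) * ((x + 1) / x) ^ s := by
    rw [div_rpow hx1.le hx.le, rpow_neg hx.le, rpow_neg hx1.le]
    field_simp
  have hsucc : (x + 1) ^ (-(s + 1)) = (x + 1) ^ (-s) * (x + 1)⁻¹ := by
    rw [neg_add, rpow_add hx1, rpow_neg_one]
  rw [hsplit, hsucc]
  calc s * ((x + 1) ^ (-s) * (x + 1)⁻¹)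
      = (x + 1) ^ (-s) * (1 + s / (x + 1)) - (x + 1) ^ (-s) := by ring
    _ ≤ (x + 1) ^ (-s) * ((x + 1) / x) ^ s - (x + 1) ^ (-s) := by gcongr

lemma rpow_add_mul_rpow_sub_one_mul_le {p u δ : ℝ} (hp : 1 ≤ p) (hu : 0 < u) (hδ : -u ≤ δ) :
    u ^ p + p * u ^ (p - 1) * δ ≤ (u + δ) ^ p := by
  have hδu : -1 ≤ δ / u := by rwa [le_div_iff₀ hu, neg_one_mul]
  have hbern := one_add_mul_self_le_rpow_one_add hδu hp
  have hpow : u ^ p = u ^ (p - 1) * u := by rw [← rpow_add_one hu.ne', sub_add_cancel]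
  calc u ^ p + p * u ^ (p - 1) * δ = u ^ p * (1 + p * (δ / u)) := by
        rw [hpow]; field_simp
    _ ≤ u ^ p * (1 + δ / u) ^ p := by gcongr
    _ = (u + δ) ^ p := by
        rw [← mul_rpow hu.le (by linarith)]
        congr 1
        field_simp

noncomputable def comparisonRoot (s β D : ℝ) (n : ℕ) : ℝ :=
  β + D * (1 - (n : ℝ) ^ (-s)) + (n - 1)

section comparisonRoot

variable {s β D : ℝ}

lemma comparisonRoot_one : comparisonRoot s β D 1 = β := by
  simp [comparisonRoot]

lemma comparisonRoot_succ (n : ℕ) :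
    comparisonRoot s β D (n + 1) =
      comparisonRoot s β D n + D * ((n : ℝ) ^ (-s) - ((n : ℝ) + 1) ^ (-s)) + 1 := by
  simp only [comparisonRoot]
  push_cast
  ring

lemma comparisonRoot_mem_Icc (hs : 0 ≤ s) (hD : 0 ≤ D) {n : ℕ} (hn : 1 ≤ n) :
    comparisonRoot s β D n ∈ Set.Icc (β + (n - 1)) (β + D + (n - 1)) := by
  have hn' : (1 : ℝ) ≤ n := by exact_mod_cast hn
  have h0 : 0 ≤ (n : ℝ) ^ (-s) := rpow_nonneg (by linarith) _
  have h1 : (n : ℝ) ^ (-s) ≤ 1 := rpow_le_one_of_one_le_of_nonpos hn' (by linarith)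
  constructor <;> simp only [comparisonRoot] <;> nlinarith

lemma rpow_comparisonRoot_add_le {m L : ℝ} (hs : 0 ≤ s) (hsm : 2 * s ≤ m - 2) (hβ : 2 ≤ β)
    (hD : 0 ≤ D) {n : ℕ} (hn : 1 ≤ n) (hL : L ≤ m * s * D * (n : ℝ) ^ s) :
    comparisonRoot s β D n ^ m + L ≤ (comparisonRoot s β D (n + 1) - 1) ^ m := by
  set u := comparisonRoot s β D n
  set δ := D * ((n : ℝ) ^ (-s) - ((n : ℝ) + 1) ^ (-s))
  have hx : (0 : ℝ) < n := by exact_mod_cast hn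
  have hx1 : (1 : ℝ) ≤ n + 1 := by linarith
  have hu : (n : ℝ) + 1 ≤ u := by linarith [(comparisonRoot_mem_Icc (β := β) hs hD hn).1]
  have hδ : D * (s * ((n : ℝ) + 1) ^ (-(s + 1))) ≤ δ :=
    mul_le_mul_of_nonneg_left (mul_rpow_neg_le_rpow_neg_sub hs hx) hD
  have hpow : ((n : ℝ) + 1) ^ s = ((n : ℝ) + 1) ^ (2 * s + 1) * ((n : ℝ) + 1) ^ (-(s + 1)) := by
    rw [← rpow_add (by linarith)]
    ring_nf
  have hm : 0 ≤ m := by linarith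
  have hδ0 : 0 ≤ δ := le_trans (by positivity) hδ
  have hL' : L ≤ m * u ^ (m - 1) * δ :=
    calc L ≤ m * s * D * (n : ℝ) ^ s := hL
      _ ≤ m * s * D * ((n : ℝ) + 1) ^ s := by gcongr; linarith
      _ = m * ((n : ℝ) + 1) ^ (2 * s + 1) * (D * (s * ((n : ℝ) + 1) ^ (-(s + 1)))) := by
          rw [hpow]; ring
      _ ≤ m * ((n : ℝ) + 1) ^ (m - 1) * δ := by
          have := rpow_le_rpow_of_exponent_le hx1 (show 2 * s + 1 ≤ m - 1 by linarith)
          gcongr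
      _ ≤ m * u ^ (m - 1) * δ := by
          gcongr
          linarith
  rw [comparisonRoot_succ, add_sub_cancel_right]
  calc u ^ m + L ≤ u ^ m + m * u ^ (m - 1) * δ := by linarith
    _ ≤ (u + δ) ^ m :=
      rpow_add_mul_rpow_sub_one_mul_le (by linarith) (by linarith) (by linarith)

lemma le_exp_rpow_comparisonRoot {m : ℝ} {b c : ℕ → ℝ} (hs : 0 ≤ s) (hsm : 2 * s ≤ m - 2)
    (hβ : 2 ≤ β) (hD : 0 ≤ D) (hb1 : b 1 = exp (β ^ m))
    (hc : ∀ n, 1 ≤ n → 1 ≤ c n ∧ log (c n) ≤ m * s * D * (n : ℝ) ^ s)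
    (hrec : ∀ n, 1 ≤ n → b (n + 1) = PhiM m (c n * b n)) {n : ℕ} (hn : 1 ≤ n) :
    1 ≤ b n ∧ b n ≤ exp (comparisonRoot s β D n ^ m) := by
  induction n, hn using Nat.le_induction with
  | base =>
    rw [hb1, comparisonRoot_one]
    exact ⟨one_le_exp (rpow_nonneg (by linarith) m), le_rfl⟩
  | succ n hn ih =>
    obtain ⟨hb, hb_le⟩ := ih
    obtain ⟨hc1, hc_log⟩ := hc n hn
    set r := comparisonRoot s β D (n + 1) - 1
    have hr : 0 ≤ r := by
      have := (comparisonRoot_mem_Icc (β := β) hs hD (Nat.le_succ_of_le hn)).1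
      push_cast at this
      linarith
    have hprod : 1 ≤ c n * b n := one_le_mul_of_one_le_of_one_le hc1 hb
    have hprod_le : c n * b n ≤ exp (r ^ m) :=
      calc c n * b n ≤ exp (log (c n)) * exp (comparisonRoot s β D n ^ m) := by
            rw [exp_log (by linarith)]
            gcongr
        _ = exp (comparisonRoot s β D n ^ m + log (c n)) := by rw [← exp_add, add_comm]
        _ ≤ exp (r ^ m) := exp_le_exp.2 (rpow_comparisonRoot_add_le hs hsm hβ hD hn hc_log)
    rw [hrec n hn]
    refine ⟨one_le_PhiM hprod, ?_⟩
    calc PhiM m (c n * b n) ≤ PhiM m (exp (r ^ m)) :=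
          monotoneOn_PhiM (by linarith) hprod (one_le_exp (rpow_nonneg hr m)) hprod_le
      _ = exp (comparisonRoot s β D (n + 1) ^ m) := by
          rw [PhiM_exp_rpow (by linarith) hr, sub_add_cancel]

end comparisonRoot

/-- Moser recurrence lemma: for m > 2, K > 1, γ > 0 and b₁ ≥ e^{2^m}, if
b_{n+1} = Φ(K n^γ b_n) then Φ^{(n-1)}(C*) ≥ b_n for all n ≥ 1, where
C* = exp(((ln b₁)^{1/m} + C_m (γ + ln K))^m) and C_m depends only on m. -/
theorem moser_recurrence (m : ℝ) (hm : 2 < m) :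
    ∃ Cm : ℝ, 0 < Cm ∧
      ∀ (K γ : ℝ), 1 < K → 0 < γ →
        ∀ b : ℕ → ℝ, Real.exp ((2 : ℝ) ^ m) ≤ b 1 →
          (∀ n : ℕ, 1 ≤ n → b (n + 1) = PhiM m (K * (n : ℝ) ^ γ * b n)) →
          ∀ n : ℕ, 1 ≤ n →
            b n ≤ (PhiM m)^[n - 1]
              (Real.exp ((Real.log (b 1) ^ (1 / m) + Cm * (γ + Real.log K)) ^ m)) := by
  set s := (m - 2) / 2
  have hs : 0 < s := by positivity
  refine ⟨(1 + 1 / s) / (m * s), by positivity, ?_⟩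
  intro K γ hK hγ b hb1 hrec n hn
  set β := log (b 1) ^ (1 / m)
  set D := (1 + 1 / s) / (m * s) * (γ + log K)
  have hβ : 2 ≤ β := le_rpow_one_div_log (by linarith) zero_le_two hb1
  have hD : 0 ≤ D := mul_nonneg (by positivity) (by linarith [log_nonneg hK.le])
  have hmsD : m * s * D = (γ + log K) * (1 + 1 / s) := by
    simp only [D]
    field_simp
  have hc : ∀ k : ℕ, 1 ≤ k →
      1 ≤ K * (k : ℝ) ^ γ ∧ log (K * (k : ℝ) ^ γ) ≤ m * s * D * (k : ℝ) ^ s :=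
    fun k hk => ⟨one_le_mul_of_one_le_of_one_le hK.le (one_le_rpow (by exact_mod_cast hk) hγ.le),
      hmsD ▸ log_mul_rpow_le hK.le hγ.le hs (by exact_mod_cast hk)⟩
  have hb1_eq : b 1 = exp (β ^ m) :=
    (exp_rpow_rpow_one_div_log (by linarith) ((one_le_exp (by positivity)).trans hb1)).symm
  rw [iterate_PhiM_exp_rpow (by linarith) _ (by linarith), Nat.cast_sub hn, Nat.cast_one]
  calc b n ≤ exp (comparisonRoot s β D n ^ m) :=
        (le_exp_rpow_comparisonRoot hs.le (by simp only [s]; linarith) hβ hD hb1_eq hc hrec hn).2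
    _ ≤ exp ((β + D + (n - 1)) ^ m) := by
        have hroot := comparisonRoot_mem_Icc (β := β) hs.le hD hn
        gcongr
        · linarith [hroot.1, (by exact_mod_cast hn : (1 : ℝ) ≤ n)]
        · exact hroot.2
end

section
/- Fix m > 2, K > 1, γ > 0 and b_1 ≥ e^{2^m}. Define β_1 = (ln b_1)^{1/m} and β_{n+1} = (β_n^m + ln(K n^γ))^{1/m} + 1. Then β_{n+1} ≥ β_1 + n for all n ≥ 1, and β_{n+1} ≤ β_1 + n + (1/m) Σ_{j=1}^n ln(K j^γ)/β_j^{m-1}. -/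
/-!
Each step of the recursion adds exactly `1` plus the increment of the `m`-th root
`(β^m + c)^(1/m) - β`, which is nonnegative and, by Bernoulli's inequality
`(1 + t)^m ≥ 1 + m t`, at most the tangent-line value `c / (m β^(m-1))`.
Summing these one-step estimates telescopes to the two bounds.
-/

open Finset

namespace Real

lemma le_rpow_add_one_div {a c m : ℝ} (ha : 0 ≤ a) (hc : 0 ≤ c) (hm : 0 < m) :
    a ≤ (a ^ m + c) ^ (1 / m) := by
  rw [one_div, le_rpow_inv_iff_of_pos ha (by positivity) hm]
  linarith

lemma rpow_add_one_div_le {a c m : ℝ} (ha : 0 < a) (hc : 0 ≤ c) (hm : 1 ≤ m) :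
    (a ^ m + c) ^ (1 / m) ≤ a + c / (m * a ^ (m - 1)) := by
  have hm0 : 0 < m := by linarith
  set t := c / (m * a ^ m) with ht
  have ht0 : 0 ≤ t := by positivity
  have htangent : a + c / (m * a ^ (m - 1)) = a * (1 + t) := by
    rw [ht, rpow_sub_one ha.ne']
    field_simp
  rw [one_div, rpow_inv_le_iff_of_pos (by positivity) (by positivity) hm0, htangent,
    mul_rpow ha.le (by positivity)]
  calc a ^ m + c = a ^ m * (1 + m * t) := by rw [ht]; field_simp
    _ ≤ a ^ m * (1 + t) ^ m := by
      gcongr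
      exact one_add_mul_self_le_rpow_one_add (by linarith) hm

end Real

section RootRecursion

variable {m : ℝ} {β c : ℕ → ℝ}

lemma root_recursion_bounds (hm : 1 ≤ m) (hβ1 : 0 < β 1) (hc : ∀ n, 1 ≤ n → 0 ≤ c n)
    (hrec : ∀ n, 1 ≤ n → β (n + 1) = (β n ^ m + c n) ^ (1 / m) + 1) (n : ℕ) :
    β 1 + n ≤ β (n + 1) ∧
      β (n + 1) ≤ β 1 + n + (1 / m) * ∑ j ∈ Icc 1 n, c j / β j ^ (m - 1) := by
  induction n with
  | zero => simp
  | succ n ih =>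
    obtain ⟨ih_lower, ih_upper⟩ := ih
    have hβpos : 0 < β (n + 1) := by linarith [n.cast_nonneg (α := ℝ)]
    have hcn := hc (n + 1) (by omega)
    have hstep_lower := Real.le_rpow_add_one_div hβpos.le hcn (by linarith : (0 : ℝ) < m)
    have hstep_upper := Real.rpow_add_one_div_le hβpos hcn hm
    rw [sum_Icc_succ_top (by omega), hrec (n + 1) (by omega)]
    push_cast
    constructor
    · linarith
    · have hsplit : c (n + 1) / (m * β (n + 1) ^ (m - 1))
          = 1 / m * (c (n + 1) / β (n + 1) ^ (m - 1)) := by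
        field_simp
      linarith

end RootRecursion

/-- Core recursion estimate of the Moser iteration lemma: with
β₁ = (ln b₁)^{1/m} and β_{n+1} = (β_n^m + ln(K n^γ))^{1/m} + 1, one has
β₁ + n ≤ β_{n+1} ≤ β₁ + n + (1/m) Σ_{j=1}^n ln(K j^γ)/β_j^{m-1}. -/
theorem beta_recursion_bounds (m K γ b1 : ℝ) (hm : 2 < m) (hK : 1 < K) (hγ : 0 < γ)
    (hb1 : Real.exp ((2 : ℝ) ^ m) ≤ b1)
    (β : ℕ → ℝ) (hβ1 : β 1 = Real.log b1 ^ (1 / m))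
    (hrec : ∀ n : ℕ, 1 ≤ n →
      β (n + 1) = (β n ^ m + Real.log (K * (n : ℝ) ^ γ)) ^ (1 / m) + 1) :
    ∀ n : ℕ, 1 ≤ n →
      β 1 + n ≤ β (n + 1) ∧
      β (n + 1) ≤ β 1 + n +
        (1 / m) * ∑ j ∈ Finset.Icc 1 n, Real.log (K * (j : ℝ) ^ γ) / β j ^ (m - 1) := by
  have hlog_nonneg : ∀ n : ℕ, 1 ≤ n → 0 ≤ Real.log (K * (n : ℝ) ^ γ) := fun n hn ↦
    Real.log_nonneg <| one_le_mul_of_one_le_of_one_le hK.le <|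
      Real.one_le_rpow (by exact_mod_cast hn) hγ.le
  have hlog_b1 : 0 < Real.log b1 :=
    Real.log_pos <| (Real.one_lt_exp_iff.mpr (by positivity)).trans_le hb1
  have hβ1_pos : 0 < β 1 := hβ1 ▸ Real.rpow_pos_of_pos hlog_b1 _
  exact fun n _ ↦ root_recursion_bounds (by linarith) hβ1_pos hlog_nonneg hrec n
end

section
/- Let Ξ : [0,∞) → [0,∞) be strictly increasing with Ξ(0)=0 and Ξ([0,∞)) = [0,∞), satisfying: for all M > M_1 > 0, liminf_{j→∞} Ξ^{(j)}(M)/Ξ^{(j)}(M_1) = ∞, where Ξ^{(j)} is the j-fold composition. Let D ⋐ D_1 be nonempty bounded open sets in ℝⁿ with a nested sequence D_1 ⋑ D_2 ⋑ ⋯ ⋑ D, ∩_j D_j = closure(D). Let ω be a Borel measure on D_1 with ω(D_1) < ∞ such that Lebesgue measure is absolutely continuous with respect to ω. Then for any ω-measurable f on D_1: ‖f‖_{L^∞(D)} ≤ liminf_{j→∞} Ξ^{(-j)}(∫_{D_j} Ξ^{(j)}(|f|) dω). -/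
/-!
Essential boundedness is tested on the level sets `{M < |f|}` with `c < M < ‖f‖_∞`: such a set
has positive Lebesgue measure on `D`, hence positive `ω`-mass `m` inside every `D_j`. Markov's
inequality bounds the `j`-th integral below by `Ξ^{(j)}(M) m`, and the growth hypothesis makes
this eventually exceed `Ξ^{(j)}(c)`; applying `Ξ^{(-j)}` gives `c` as an eventual lower bound.
-/

open MeasureTheory Filter ENNReal

theorem ENNReal.le_mul_of_inv_lt_div {a b m : ℝ≥0∞} (hab : a < b) (h : m⁻¹ < b / a) :
    a ≤ b * m := by
  have hb : b ≠ 0 := hab.ne_bot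
  rw [inv_lt_iff_inv_lt, ENNReal.inv_div (Or.inl hab.ne_top) (Or.inr hb)] at h
  rw [mul_comm]
  exact (ENNReal.div_le_iff_le_mul (Or.inl hb) (Or.inr (pos_of_gt h).ne')).1 h.le

section Measure

variable {α : Type*} [MeasurableSpace α]

theorem measure_lt_ne_zero_of_lt_essSup {μ : Measure α} {g : α → ℝ≥0∞} {M : ℝ≥0∞}
    (hM : M < essSup g μ) : μ {x | M < g x} ≠ 0 := fun h =>
  hM.not_ge <| essSup_le_of_ae_le M <| by simpa [EventuallyLE, ae_iff] using h

theorem mul_measure_lt_le_lintegral_comp {μ : Measure α} {φ : ℝ≥0∞ → ℝ≥0∞} (hφ : Monotone φ)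
    {g : α → ℝ≥0∞} (hg : Measurable g) (M : ℝ≥0∞) :
    φ M * μ {x | M < g x} ≤ ∫⁻ x, φ (g x) ∂μ :=
  calc φ M * μ {x | M < g x} ≤ φ M * μ {x | φ M ≤ φ (g x)} := by
        gcongr
        exact fun hx => hφ hx.le
    _ ≤ ∫⁻ x, φ (g x) ∂μ := mul_meas_ge_le_lintegral (hφ.measurable.comp hg) _

end Measure

section Iterates

variable {Ξ Ψ : ℝ≥0∞ → ℝ≥0∞}

theorem eventually_iterate_le_iterate_mul (hΞ : StrictMono Ξ) {c M m : ℝ≥0∞} (hcM : c < M)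
    (hgrow : liminf (fun j => Ξ^[j] M / Ξ^[j] c) atTop = ⊤) (hm : m ≠ 0) :
    ∀ᶠ j in atTop, Ξ^[j] c ≤ Ξ^[j] M * m := by
  have hm_inv : m⁻¹ < liminf (fun j => Ξ^[j] M / Ξ^[j] c) atTop := by
    rw [hgrow]
    exact ENNReal.inv_lt_top.2 (pos_iff_ne_zero.2 hm)
  filter_upwards [eventually_lt_of_lt_liminf hm_inv] with j hj
  exact ENNReal.le_mul_of_inv_lt_div (hΞ.iterate j hcM) hj

theorem le_iterate_iff_iterate_le (hΞ : StrictMono Ξ) (hΞΨ : Function.RightInverse Ψ Ξ)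
    (j : ℕ) {c x : ℝ≥0∞} : c ≤ Ψ^[j] x ↔ Ξ^[j] c ≤ x := by
  rw [← (hΞ.iterate j).le_iff_le, hΞΨ.iterate j x]

theorem essSup_le_liminf_iterate_setLIntegral {α : Type*} [MeasurableSpace α] (hΞ : StrictMono Ξ)
    (hΞΨ : Function.RightInverse Ψ Ξ)
    (hgrow : ∀ M c : ℝ≥0∞, 0 < c → c < M → M ≠ ⊤ →
      liminf (fun j => Ξ^[j] M / Ξ^[j] c) atTop = ⊤)
    {μ ω : Measure α} (hμω : μ ≪ ω) {s : Set α} {t : ℕ → Set α} (hst : ∀ j, s ⊆ t j)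
    {g : α → ℝ≥0∞} (hg : Measurable g) :
    essSup g (μ.restrict s) ≤ liminf (fun j => Ψ^[j] (∫⁻ x in t j, Ξ^[j] (g x) ∂ω)) atTop := by
  refine le_of_forall_lt_imp_le_of_dense fun c hc => ?_
  rcases eq_zero_or_pos c with rfl | hc0
  · exact zero_le
  obtain ⟨M, hcM, hM⟩ := exists_between hc
  have hm : ω.restrict s {x | M < g x} ≠ 0 :=
    fun h => measure_lt_ne_zero_of_lt_essSup hM (hμω.restrict s h)
  refine le_liminf_of_le (by isBoundedDefault) ?_
  filter_upwards [eventually_iterate_le_iterate_mul hΞ hcM (hgrow M c hc0 hcM hM.ne_top) hm]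
    with j hj
  rw [le_iterate_iff_iterate_le hΞ hΞΨ]
  calc Ξ^[j] c ≤ Ξ^[j] M * ω.restrict s {x | M < g x} := hj
    _ ≤ Ξ^[j] M * ω.restrict (t j) {x | M < g x} := by
        gcongr
        exact hst j
    _ ≤ ∫⁻ x in t j, Ξ^[j] (g x) ∂ω :=
        mul_measure_lt_le_lintegral_comp (hΞ.monotone.iterate j) hg M

end Iterates

theorem liminf_iterates_ge_linf_general (n : ℕ) (Ξ Ψ : ENNReal → ENNReal)
    (hΞmono : StrictMono Ξ)
    (hΞΨ : ∀ x, Ξ (Ψ x) = x)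
    (hgrow : ∀ M M1 : ENNReal, 0 < M1 → M1 < M → M ≠ ⊤ →
      Filter.liminf (fun j => Ξ^[j] M / Ξ^[j] M1) Filter.atTop = ⊤)
    (D : Set (Fin n → ℝ)) (Dj : ℕ → Set (Fin n → ℝ))
    (hDsub : ∀ j, closure D ⊆ Dj j)
    (ω : Measure (Fin n → ℝ))
    (hac : MeasureTheory.volume ≪ ω)
    (f : (Fin n → ℝ) → ℝ) (hf : Measurable f) :
    eLpNorm f ⊤ (MeasureTheory.volume.restrict D) ≤
      Filter.liminf
        (fun j => Ψ^[j] (∫⁻ x in Dj j, Ξ^[j] (ENNReal.ofReal |f x|) ∂ω))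
        Filter.atTop := by
  rw [eLpNorm_exponent_top, eLpNormEssSup]
  simp only [Real.enorm_eq_ofReal_abs]
  exact essSup_le_liminf_iterate_setLIntegral hΞmono hΞΨ hgrow hac
    (fun j => subset_closure.trans (hDsub j)) (ENNReal.measurable_ofReal.comp hf.abs)

/-- Convergence of iterated Orlicz expressions to the L^∞ norm: if Ξ is strictly increasing
on [0,∞] with Ξ(0)=0, finite on finite values, with inverse Ψ, and iterates of Ξ separate
distinct positive values (liminf of ratios is ∞), then for nested bounded open sets
D_j shrinking to the closure of D and a finite Borel measure ω with Lebesgue ≪ ω,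
‖f‖_{L^∞(D)} ≤ liminf_j Ξ^{(-j)}(∫_{D_j} Ξ^{(j)}(|f|) dω). -/
theorem liminf_iterates_ge_linf (n : ℕ) (Ξ Ψ : ENNReal → ENNReal)
    (hΞmono : StrictMono Ξ) (hΞ0 : Ξ 0 = 0)
    (hΞfin : ∀ x : ENNReal, x ≠ ⊤ → Ξ x ≠ ⊤)
    (hΨΞ : ∀ x, Ψ (Ξ x) = x) (hΞΨ : ∀ x, Ξ (Ψ x) = x)
    (hgrow : ∀ M M1 : ENNReal, 0 < M1 → M1 < M → M ≠ ⊤ →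
      Filter.liminf (fun j => Ξ^[j] M / Ξ^[j] M1) Filter.atTop = ⊤)
    (D : Set (Fin n → ℝ)) (Dj : ℕ → Set (Fin n → ℝ))
    (hDopen : IsOpen D) (hDne : D.Nonempty) (hDb : Bornology.IsBounded D)
    (hD1ne : (Dj 0).Nonempty)
    (hDjopen : ∀ j, IsOpen (Dj j)) (hDjb : ∀ j, Bornology.IsBounded (Dj j))
    (hnest : ∀ j, closure (Dj (j + 1)) ⊆ Dj j)
    (hDsub : ∀ j, closure D ⊆ Dj j)
    (hinter : ⋂ j, Dj j = closure D)
    (ω : Measure (Fin n → ℝ)) (hωfin : ω (Dj 0) < ⊤)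
    (hac : MeasureTheory.volume ≪ ω)
    (f : (Fin n → ℝ) → ℝ) (hf : Measurable f) :
    eLpNorm f ⊤ (MeasureTheory.volume.restrict D) ≤
      Filter.liminf
        (fun j => Ψ^[j] (∫⁻ x in Dj j, Ξ^[j] (ENNReal.ofReal |f x|) ∂ω))
        Filter.atTop :=
  liminf_iterates_ge_linf_general n Ξ Ψ hΞmono hΞΨ hgrow D Dj hDsub ω hac f hf
end

section
/- Let m > 1 and Φ_m(t) = exp(((ln t)^{1/m}+1)^m) for t > E = e^{2^m}, extended linearly to [0, E]. For any M > M_1 > 0, lim_{N→∞} Φ_m^{(N)}(M)/Φ_m^{(N)}(M_1) = ∞, where Φ_m^{(N)} is the N-fold composition. -/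
/-!
On `[E, ∞)`, `E = exp (2 ^ m)`, the map `Φ_m` is conjugate to the shift `s ↦ s + 1` through
`s ↦ exp (s ^ m)`, `s ≥ 2`; below `E` it is multiplication by `exp (3 ^ m) / exp (2 ^ m) > 1`,
so every positive orbit enters `[E, ∞)`. As `Φ_m` is strictly increasing, after `N₀` steps the
orbits of `M₁ < M` sit at `exp (b ^ m) < exp (a ^ m)`, and `N` steps later their ratio is
`exp ((a + N) ^ m - (b + N) ^ m) ≥ exp ((a - b) (a + N) ^ (m - 1)) → ∞`.
-/

/-- Φ_m extended linearly on [0, e^{2^m}]: Φ_m(t) = exp(((ln t)^{1/m}+1)^m) for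
t ≥ E = e^{2^m}, and Φ_m(t) = (Φ_m(E)/E) t = (e^{3^m}/e^{2^m}) t for t ≤ E. -/
noncomputable def PhiMExt (m : ℝ) (t : ℝ) : ℝ :=
  if Real.exp ((2 : ℝ) ^ m) ≤ t then Real.exp ((Real.log t ^ (1 / m) + 1) ^ m)
  else (Real.exp ((3 : ℝ) ^ m) / Real.exp ((2 : ℝ) ^ m)) * t

open Real Filter Set Function

theorem StrictMonoOn.iterate {α : Type*} [Preorder α] {f : α → α} {s : Set α}
    (hf : StrictMonoOn f s) (hs : MapsTo f s s) : ∀ n : ℕ, StrictMonoOn f^[n] s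
  | 0 => strictMonoOn_id
  | n + 1 => by
    rw [iterate_succ']
    exact hf.comp (hf.iterate hs n) (hs.iterate n)

theorem tendsto_add_rpow_sub_add_rpow_atTop {m a b : ℝ} (hm : 1 < m) (hba : b < a) :
    Tendsto (fun x : ℝ => (a + x) ^ m - (b + x) ^ m) atTop atTop := by
  have hlower : ∀ᶠ x in atTop, (a - b) * (a + x) ^ (m - 1) ≤ (a + x) ^ m - (b + x) ^ m := by
    filter_upwards [eventually_ge_atTop (-b)] with x hx
    have hbx : 0 ≤ b + x := by linarith
    have hax : 0 ≤ a + x := by linarith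
    -- `(b + x) ^ m = (b + x) ^ (m - 1) * (b + x) ≤ (a + x) ^ (m - 1) * (b + x)`
    have hpow : (b + x) ^ (m - 1) ≤ (a + x) ^ (m - 1) :=
      rpow_le_rpow hbx (by linarith) (by linarith)
    have hsplit : ∀ y : ℝ, 0 ≤ y → y ^ m = y ^ (m - 1) * y := fun y hy => by
      conv_lhs => rw [← sub_add_cancel m 1, rpow_add' hy (by linarith), rpow_one]
    rw [hsplit _ hax, hsplit _ hbx]
    nlinarith
  refine tendsto_atTop_mono' _ hlower (Tendsto.const_mul_atTop (by linarith) ?_)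
  exact (tendsto_rpow_atTop (by linarith)).comp (tendsto_atTop_add_const_left _ a tendsto_id)

section
variable {m s t : ℝ}

theorem phiMExt_of_le (ht : exp (2 ^ m) ≤ t) :
    PhiMExt m t = exp ((log t ^ (1 / m) + 1) ^ m) :=
  if_pos ht

theorem phiMExt_exp_rpow (hm : 0 < m) (hs : 2 ≤ s) :
    PhiMExt m (exp (s ^ m)) = exp ((s + 1) ^ m) := by
  have hE : exp (2 ^ m) ≤ exp (s ^ m) :=
    exp_le_exp.2 (rpow_le_rpow (by norm_num) hs hm.le)
  rw [phiMExt_of_le hE, log_exp, one_div, rpow_rpow_inv (by linarith) hm.ne']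

theorem phiMExt_of_le_exp (hm : 0 < m) (ht : t ≤ exp (2 ^ m)) :
    PhiMExt m t = exp (3 ^ m) / exp (2 ^ m) * t := by
  rcases ht.lt_or_eq with ht | rfl
  · exact if_neg ht.not_ge
  · rw [phiMExt_exp_rpow hm le_rfl, div_mul_cancel₀ _ (exp_pos _).ne']
    norm_num

theorem phiMExt_iterate_exp_rpow (hm : 0 < m) (hs : 2 ≤ s) (n : ℕ) :
    (PhiMExt m)^[n] (exp (s ^ m)) = exp ((s + n) ^ m) := by
  induction n generalizing s with
  | zero => simp
  | succ n ih =>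
    rw [iterate_succ_apply, phiMExt_exp_rpow hm hs, ih (by linarith)]
    push_cast
    ring_nf

theorem exists_exp_rpow_eq (hm : 0 < m) (ht : exp (2 ^ m) ≤ t) :
    ∃ s, 2 ≤ s ∧ exp (s ^ m) = t := by
  have ht0 : 0 < t := (exp_pos _).trans_le ht
  have hlog : 2 ^ m ≤ log t := (le_log_iff_exp_le ht0).2 ht
  refine ⟨log t ^ m⁻¹, ?_, ?_⟩
  · calc (2 : ℝ) = ((2 : ℝ) ^ m) ^ m⁻¹ := (rpow_rpow_inv (by norm_num) hm.ne').symm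
      _ ≤ log t ^ m⁻¹ := rpow_le_rpow (by positivity) hlog (by positivity)
  · rw [rpow_inv_rpow ((by positivity : (0 : ℝ) ≤ 2 ^ m).trans hlog) hm.ne', exp_log ht0]

theorem mapsTo_phiMExt_Ici (hm : 0 < m) :
    MapsTo (PhiMExt m) (Ici (exp (2 ^ m))) (Ici (exp (2 ^ m))) := by
  intro t ht
  obtain ⟨s, hs, rfl⟩ := exists_exp_rpow_eq hm ht
  rw [mem_Ici, phiMExt_exp_rpow hm hs, exp_le_exp]
  exact rpow_le_rpow (by norm_num) (by linarith) hm.le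

theorem mapsTo_phiMExt_Ioi : MapsTo (PhiMExt m) (Ioi 0) (Ioi 0) := by
  intro t (ht : 0 < t)
  show 0 < PhiMExt m t
  unfold PhiMExt
  split_ifs <;> positivity

theorem strictMonoOn_phiMExt (hm : 0 < m) : StrictMonoOn (PhiMExt m) (Ioi 0) := by
  have hlow : StrictMonoOn (PhiMExt m) (Ioc 0 (exp (2 ^ m))) := by
    intro x hx y hy hxy
    rw [phiMExt_of_le_exp hm hx.2, phiMExt_of_le_exp hm hy.2]
    exact mul_lt_mul_of_pos_left hxy (by positivity)
  have hhigh : StrictMonoOn (PhiMExt m) (Ici (exp (2 ^ m))) := by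
    intro x hx y hy hxy
    obtain ⟨a, ha, rfl⟩ := exists_exp_rpow_eq hm hx
    obtain ⟨b, hb, rfl⟩ := exists_exp_rpow_eq hm hy
    rw [exp_lt_exp, rpow_lt_rpow_iff (by linarith) (by linarith) hm] at hxy
    rw [phiMExt_exp_rpow hm ha, phiMExt_exp_rpow hm hb, exp_lt_exp]
    exact rpow_lt_rpow (by linarith) (by linarith) hm
  rw [← Ioc_union_Ici_eq_Ioi (exp_pos _)]
  exact hlow.union hhigh (isGreatest_Ioc (exp_pos _)) isLeast_Ici

theorem eventually_le_phiMExt_iterate (hm : 0 < m) (ht : 0 < t) :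
    ∀ᶠ n in atTop, exp (2 ^ m) ≤ (PhiMExt m)^[n] t := by
  obtain ⟨n₀, hn₀⟩ : ∃ n, exp (2 ^ m) ≤ (PhiMExt m)^[n] t := by
    by_contra! hbelow
    have hc : 1 < exp (3 ^ m) / exp (2 ^ m) := by
      rw [one_lt_div (exp_pos _), exp_lt_exp]
      exact rpow_lt_rpow (by norm_num) (by norm_num) hm
    have hlin : ∀ n : ℕ, (PhiMExt m)^[n] t = (exp (3 ^ m) / exp (2 ^ m)) ^ n * t := by
      intro n
      induction n with
      | zero => simp
      | succ n ih =>
        rw [iterate_succ_apply', phiMExt_of_le_exp hm (hbelow n).le, ih, pow_succ']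
        ring
    obtain ⟨n, hn⟩ := (((tendsto_pow_atTop_atTop_of_one_lt hc).atTop_mul_const ht)
      |>.eventually_ge_atTop (exp (2 ^ m))).exists
    exact (hbelow n).not_ge (hlin n ▸ hn)
  filter_upwards [eventually_ge_atTop n₀] with n hn
  rw [← Nat.sub_add_cancel hn, iterate_add_apply]
  exact (mapsTo_phiMExt_Ici hm).iterate _ hn₀

end

/-- For m > 1 and M > M₁ > 0, the ratio Φ_m^{(N)}(M)/Φ_m^{(N)}(M₁) of N-fold
compositions tends to infinity. -/
theorem iterates_ratio_tendsto_atTop (m : ℝ) (hm : 1 < m) (M M1 : ℝ)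
    (hM1 : 0 < M1) (hMM1 : M1 < M) :
    Filter.Tendsto (fun N : ℕ => (PhiMExt m)^[N] M / (PhiMExt m)^[N] M1)
      Filter.atTop Filter.atTop := by
  have hm₀ : 0 < m := by linarith
  have hM : 0 < M := hM1.trans hMM1
  obtain ⟨N₀, hu, hv⟩ := ((eventually_le_phiMExt_iterate hm₀ hM).and
    (eventually_le_phiMExt_iterate hm₀ hM1)).exists
  have hvu : (PhiMExt m)^[N₀] M1 < (PhiMExt m)^[N₀] M :=
    (strictMonoOn_phiMExt hm₀).iterate mapsTo_phiMExt_Ioi N₀ hM1 hM hMM1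
  obtain ⟨a, ha, hau⟩ := exists_exp_rpow_eq hm₀ hu
  obtain ⟨b, hb, hbv⟩ := exists_exp_rpow_eq hm₀ hv
  have hba : b < a := by
    rwa [← hau, ← hbv, exp_lt_exp, rpow_lt_rpow_iff (by linarith) (by linarith) hm₀] at hvu
  have hratio : ∀ N : ℕ, (PhiMExt m)^[N + N₀] M / (PhiMExt m)^[N + N₀] M1 =
      exp ((a + N) ^ m - (b + N) ^ m) := by
    intro N
    rw [iterate_add_apply, iterate_add_apply, ← hau, ← hbv, phiMExt_iterate_exp_rpow hm₀ ha,
      phiMExt_iterate_exp_rpow hm₀ hb, exp_sub]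
  rw [← tendsto_add_atTop_iff_nat N₀]
  simp only [hratio]
  exact tendsto_exp_atTop.comp
    ((tendsto_add_rpow_sub_add_rpow_atTop hm hba).comp tendsto_natCast_atTop_atTop)
end

section
/- Let m > 1 and Φ(t) = exp(((ln t)^{1/m}+1)^m). Then Φ''(t) > 0 for all t ≥ e; i.e., Φ is convex on [e, ∞). -/
/-!
Write `Φ = exp ∘ h ∘ log` with `h x = (x ^ (1/m) + 1) ^ m`. Then
`t² Φ''(t) = Φ(t) · (h'² + h'' - h')(log t)`, where, with `y = x ^ (-1/m)`,
`h' x = (1 + y) ^ (m - 1)` and `h'' x = -((m - 1)/m) (1 + y) ^ (m - 2) x ^ (-1/m - 1)`.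
After factoring out `(1 + y) ^ (m - 2)`, positivity for `x ≥ 1` becomes
`(1 + y) ^ m - (1 + y) > ((m - 1)/m) x ^ (-1/m - 1)`: Bernoulli's inequality bounds the left side
below by `(m - 1) y`, and the right side is at most `((m - 1)/m) y` since `x ≥ 1`.
-/

open Real Set Topology

section ExpCompLog

variable {h h₁ h₂ : ℝ → ℝ} {t : ℝ}

lemma hasDerivAt_exp_comp_log (ht : t ≠ 0) (hh : HasDerivAt h (h₁ (log t)) (log t)) :
    HasDerivAt (fun s => exp (h (log s))) (exp (h (log t)) * h₁ (log t) / t) t := by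
  refine (hh.comp t (hasDerivAt_log ht)).exp.congr_deriv ?_
  simp only [Function.comp_apply]
  ring

lemma hasDerivAt_exp_comp_log_mul_div (ht : t ≠ 0) (hh : HasDerivAt h (h₁ (log t)) (log t))
    (hh₁ : HasDerivAt h₁ (h₂ (log t)) (log t)) :
    HasDerivAt (fun s => exp (h (log s)) * h₁ (log s) / s)
      (exp (h (log t)) * (h₁ (log t) ^ 2 + h₂ (log t) - h₁ (log t)) / t ^ 2) t := by
  refine (((hasDerivAt_exp_comp_log ht hh).mul (hh₁.comp t (hasDerivAt_log ht))).div
    (hasDerivAt_id t) ht).congr_deriv ?_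
  simp only [Function.comp_apply, Pi.mul_apply, id]
  field_simp

lemma iteratedDeriv_two_exp_comp_log (hh : ∀ x, 0 < x → HasDerivAt h (h₁ x) x)
    (hh₁ : ∀ x, 0 < x → HasDerivAt h₁ (h₂ x) x) (ht : 1 < t) :
    iteratedDeriv 2 (fun s => exp (h (log s))) t =
      exp (h (log t)) * (h₁ (log t) ^ 2 + h₂ (log t) - h₁ (log t)) / t ^ 2 := by
  have hderiv : deriv (fun s => exp (h (log s))) =ᶠ[𝓝 t]
      fun s => exp (h (log s)) * h₁ (log s) / s := by
    filter_upwards [Ioi_mem_nhds ht] with s hs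
    exact (hasDerivAt_exp_comp_log (zero_lt_one.trans hs).ne' (hh _ (log_pos hs))).deriv
  rw [iteratedDeriv_succ, iteratedDeriv_one, hderiv.deriv_eq]
  exact (hasDerivAt_exp_comp_log_mul_div (zero_lt_one.trans ht).ne' (hh _ (log_pos ht))
    (hh₁ _ (log_pos ht))).deriv

lemma convexOn_exp_comp_log (hh : ∀ x, 0 < x → HasDerivAt h (h₁ x) x)
    (hh₁ : ∀ x, 0 < x → HasDerivAt h₁ (h₂ x) x) {a : ℝ} (ha : 1 < a)
    (hpos : ∀ x, log a ≤ x → 0 ≤ h₁ x ^ 2 + h₂ x - h₁ x) :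
    ConvexOn ℝ (Ici a) (fun s => exp (h (log s))) := by
  have hlog : ∀ s, a ≤ s → 0 < log s := fun s hs => log_pos (ha.trans_le hs)
  have hs0 : ∀ s, a ≤ s → s ≠ 0 := fun s hs => (zero_lt_one.trans (ha.trans_le hs)).ne'
  refine convexOn_of_hasDerivWithinAt2_nonneg (convex_Ici a)
    (f' := fun s => exp (h (log s)) * h₁ (log s) / s)
    (f'' := fun s => exp (h (log s)) * (h₁ (log s) ^ 2 + h₂ (log s) - h₁ (log s)) / s ^ 2)
    (fun s hs => (hasDerivAt_exp_comp_log (hs0 s hs) (hh _ (hlog s hs))).continuousAt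
      |>.continuousWithinAt) (fun s hs => ?_) (fun s hs => ?_) (fun s hs => ?_)
  all_goals rw [interior_Ici] at hs
  · exact (hasDerivAt_exp_comp_log (hs0 s hs.le) (hh _ (hlog s hs.le))).hasDerivWithinAt
  · exact (hasDerivAt_exp_comp_log_mul_div (hs0 s hs.le) (hh _ (hlog s hs.le))
      (hh₁ _ (hlog s hs.le))).hasDerivWithinAt
  · have := hpos _ (log_le_log (zero_lt_one.trans ha) hs.le)
    positivity

end ExpCompLog

section PhiExponent

variable {m x : ℝ}

lemma hasDerivAt_rpow_one_div_add_one_rpow (hm : m ≠ 0) (hx : 0 < x) :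
    HasDerivAt (fun u => (u ^ (1 / m) + 1) ^ m) ((1 + x ^ (-1 / m)) ^ (m - 1)) x := by
  have hu : 0 < x ^ (1 / m) + 1 := by positivity
  refine (((hasDerivAt_rpow_const (Or.inl hx.ne')).add_const 1).rpow_const
    (p := m) (Or.inl hu.ne')).congr_deriv ?_
  have hsplit : 1 + x ^ (-1 / m) = (x ^ (1 / m) + 1) * x ^ (-1 / m) := by
    rw [add_mul, ← rpow_add hx, neg_div, add_neg_cancel, rpow_zero, one_mul, add_comm]
  have hpow : (x ^ (-1 / m)) ^ (m - 1) = x ^ (1 / m - 1) := by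
    rw [← rpow_mul hx.le]
    congr 1
    field_simp
    ring
  rw [hsplit, mul_rpow hu.le (by positivity), hpow]
  field_simp

lemma hasDerivAt_one_add_rpow_rpow (hx : 0 < x) :
    HasDerivAt (fun u => (1 + u ^ (-1 / m)) ^ (m - 1))
      (-((m - 1) / m) * (1 + x ^ (-1 / m)) ^ (m - 2) * x ^ (-1 / m - 1)) x := by
  have hu : 0 < 1 + x ^ (-1 / m) := by positivity
  refine (((hasDerivAt_rpow_const (Or.inl hx.ne')).const_add 1).rpow_const
    (p := m - 1) (Or.inl hu.ne')).congr_deriv ?_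
  rw [show m - 1 - 1 = m - 2 by ring]
  ring

lemma one_add_rpow_sq_add_sub_pos (hm : 1 < m) (hx : 1 ≤ x) :
    0 < ((1 + x ^ (-1 / m)) ^ (m - 1)) ^ 2
      + -((m - 1) / m) * (1 + x ^ (-1 / m)) ^ (m - 2) * x ^ (-1 / m - 1)
      - (1 + x ^ (-1 / m)) ^ (m - 1) := by
  have hm0 : 0 < m := zero_lt_one.trans hm
  set y := x ^ (-1 / m)
  have hy0 : 0 < y := by positivity
  have hz : x ^ (-1 / m - 1) ≤ y := rpow_le_rpow_of_exponent_le hx (by linarith)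
  have hu : 1 + y ≠ 0 := by positivity
  have hbernoulli : 1 + m * y ≤ (1 + y) ^ m :=
    one_add_mul_self_le_rpow_one_add (by linarith) hm.le
  have hshrink : (m - 1) / m * y < (m - 1) * y := by
    rw [div_mul_eq_mul_div, div_lt_iff₀ hm0]
    nlinarith [mul_pos (mul_pos (sub_pos.2 hm) hy0) (sub_pos.2 hm)]
  have hbracket : 0 < (1 + y) ^ m - (1 + y) - (m - 1) / m * x ^ (-1 / m - 1) := by
    have : (m - 1) / m * x ^ (-1 / m - 1) ≤ (m - 1) / m * y := by gcongr
    linarith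
  calc (0 : ℝ) < (1 + y) ^ (m - 2) * ((1 + y) ^ m - (1 + y) - (m - 1) / m * x ^ (-1 / m - 1)) :=
        mul_pos (by positivity) hbracket
    _ = _ := by
        have hm1 : (1 + y) ^ m = (1 + y) ^ (m - 1) * (1 + y) := by
          rw [← rpow_add_one hu]; congr 1; ring
        have hm2 : (1 + y) ^ (m - 1) = (1 + y) ^ (m - 2) * (1 + y) := by
          rw [← rpow_add_one hu]; congr 1; ring
        rw [hm1, hm2]
        ring

end PhiExponent

/-- For m > 1, Φ_m(t) = exp(((ln t)^{1/m}+1)^m) has positive second derivative on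
[e, ∞); in particular it is convex on [e, ∞). -/
theorem phi_convex_on_Ici_e (m : ℝ) (hm : 1 < m) :
    (∀ t : ℝ, Real.exp 1 ≤ t →
        0 < iteratedDeriv 2 (fun s : ℝ => Real.exp ((Real.log s ^ (1 / m) + 1) ^ m)) t) ∧
      ConvexOn ℝ (Set.Ici (Real.exp 1))
        (fun s : ℝ => Real.exp ((Real.log s ^ (1 / m) + 1) ^ m)) := by
  have hh := fun x (hx : 0 < x) =>
    hasDerivAt_rpow_one_div_add_one_rpow (zero_lt_one.trans hm).ne' hx
  have hh₁ := fun x (hx : 0 < x) => hasDerivAt_one_add_rpow_rpow (m := m) hx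
  refine ⟨fun t ht => ?_, convexOn_exp_comp_log hh hh₁ (one_lt_exp_iff.2 one_pos)
    fun x hx => (one_add_rpow_sq_add_sub_pos hm (by rwa [log_exp] at hx)).le⟩
  have ht0 : 0 < t := (exp_pos 1).trans_le ht
  rw [iteratedDeriv_two_exp_comp_log hh hh₁ ((one_lt_exp_iff.2 one_pos).trans_le ht)]
  exact div_pos (mul_pos (exp_pos _) (one_add_rpow_sq_add_sub_pos hm
    ((le_log_iff_exp_le ht0).2 ht))) (pow_pos ht0 2)
end

section
/- Let h : (0,∞) → (0,∞) be twice differentiable with h, h', h'' > 0 satisfying: (i) h(t)h''(t) ≤ (h'(t))², and (ii) 1 ≤ t h'(t)/h(t) ≤ L for some L ≥ 1. For β ≥ 1 or β < 0, define h_β(t) = h(t^β). Then h_β''(t) ≥ 0 and, with Υ_β(t) = h_β(t)h_β''(t) + (h_β'(t))², one has 1 ≤ Υ_β(t)/(h_β'(t))² ≤ 2 + |β−1|/|β|, and |β| ≤ t|h_β'(t)|/h_β(t) ≤ L|β| for all t > 0. -/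
/-!
Write `s = t ^ β`. After multiplication by powers of `t`, the derivatives of `h_β` take the
Euler form `t h_β' = β s h'(s)` and `t² h_β'' = β(β-1) s h'(s) + β² s² h''(s)`. Convexity follows
since `β(β-1) ≥ 0`, the ratio `t |h_β'| / h_β` is `|β|` times `s h'(s) / h(s)`, and
`Υ_β / (h_β')² = 1 + (β-1)/β · h(s)/(s h'(s)) + h(s) h''(s)/h'(s)²`, whose last two summands are
controlled by (ii) and (i).
-/

open Topology

section RpowComp

variable {f f' f'' : ℝ → ℝ} {β t y : ℝ}

theorem hasDerivAt_comp_rpow (ht : 0 < t) (hf : HasDerivAt f y (t ^ β)) :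
    HasDerivAt (fun s => f (s ^ β)) (β * t ^ (β - 1) * y) t :=
  (hf.comp t (Real.hasDerivAt_rpow_const (Or.inl ht.ne'))).congr_deriv (by ring)

theorem mul_rpow_sub_one_self (ht : t ≠ 0) (β : ℝ) : t * t ^ (β - 1) = t ^ β := by
  rw [Real.rpow_sub_one ht, mul_div_cancel₀ _ ht]

theorem mul_deriv_comp_rpow (ht : 0 < t) (hf : HasDerivAt f y (t ^ β)) :
    t * deriv (fun s => f (s ^ β)) t = β * t ^ β * y := by
  rw [(hasDerivAt_comp_rpow ht hf).deriv, ← mul_rpow_sub_one_self ht.ne' β]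
  ring

theorem sq_mul_iteratedDeriv_two_comp_rpow (ht : 0 < t)
    (hf : ∀ s, 0 < s → HasDerivAt f (f' s) s) (hf' : HasDerivAt f' (f'' (t ^ β)) (t ^ β)) :
    t ^ 2 * iteratedDeriv 2 (fun s => f (s ^ β)) t =
      β * (β - 1) * t ^ β * f' (t ^ β) + β ^ 2 * (t ^ β) ^ 2 * f'' (t ^ β) := by
  have hderiv : deriv (fun s => f (s ^ β)) =ᶠ[𝓝 t] fun s => β * s ^ (β - 1) * f' (s ^ β) := by
    filter_upwards [Ioi_mem_nhds ht] with s hs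
    exact (hasDerivAt_comp_rpow hs (hf _ (Real.rpow_pos_of_pos hs β))).deriv
  have hpow : HasDerivAt (fun s => s ^ (β - 1)) ((β - 1) * t ^ (β - 1 - 1)) t :=
    Real.hasDerivAt_rpow_const (Or.inl ht.ne')
  have hsecond : HasDerivAt (fun s => β * s ^ (β - 1) * f' (s ^ β)) _ t :=
    (hpow.const_mul β).mul (hasDerivAt_comp_rpow ht hf')
  rw [iteratedDeriv_succ, iteratedDeriv_one, hderiv.deriv_eq, hsecond.deriv,
    ← mul_rpow_sub_one_self ht.ne' β, ← mul_rpow_sub_one_self ht.ne' (β - 1)]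
  ring

theorem mul_abs_deriv_comp_rpow_div (ht : 0 < t) (hf : HasDerivAt f (f' (t ^ β)) (t ^ β))
    (hf' : 0 < f' (t ^ β)) :
    t * |deriv (fun s => f (s ^ β)) t| / f (t ^ β) =
      |β| * (t ^ β * f' (t ^ β) / f (t ^ β)) := by
  rw [← abs_of_pos ht, ← abs_mul, abs_of_pos ht, mul_deriv_comp_rpow ht hf, mul_assoc, abs_mul,
    abs_of_pos (mul_pos (Real.rpow_pos_of_pos ht β) hf'), mul_div_assoc]

theorem upsilon_div_sq_deriv_comp_rpow (ht : 0 < t) (hβ : β ≠ 0)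
    (hf : ∀ s, 0 < s → HasDerivAt f (f' s) s) (hf' : HasDerivAt f' (f'' (t ^ β)) (t ^ β))
    (hf'0 : f' (t ^ β) ≠ 0) :
    (f (t ^ β) * iteratedDeriv 2 (fun s => f (s ^ β)) t + deriv (fun s => f (s ^ β)) t ^ 2) /
        deriv (fun s => f (s ^ β)) t ^ 2 =
      1 + (β - 1) / β * (f (t ^ β) / (t ^ β * f' (t ^ β))) +
        f (t ^ β) * f'' (t ^ β) / f' (t ^ β) ^ 2 := by
  have hs : t ^ β ≠ 0 := (Real.rpow_pos_of_pos ht β).ne'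
  have hD := mul_deriv_comp_rpow ht (hf _ (Real.rpow_pos_of_pos ht β))
  have hS := sq_mul_iteratedDeriv_two_comp_rpow ht hf hf'
  rw [mul_comm, ← eq_div_iff ht.ne'] at hD
  rw [mul_comm, ← eq_div_iff (pow_ne_zero 2 ht.ne')] at hS
  rw [hD, hS]
  field_simp
  ring

end RpowComp

theorem power_composition_estimates_general (h h' h'' : ℝ → ℝ) (L : ℝ)
    (hd1 : ∀ t : ℝ, 0 < t → HasDerivAt h (h' t) t)
    (hd2 : ∀ t : ℝ, 0 < t → HasDerivAt h' (h'' t) t)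
    (hpos : ∀ t : ℝ, 0 < t → 0 < h t)
    (hpos' : ∀ t : ℝ, 0 < t → 0 < h' t)
    (hpos'' : ∀ t : ℝ, 0 < t → 0 < h'' t)
    (hup : ∀ t : ℝ, 0 < t → h t * h'' t ≤ (h' t) ^ 2)
    (hlow : ∀ t : ℝ, 0 < t → 1 ≤ t * h' t / h t)
    (hhi : ∀ t : ℝ, 0 < t → t * h' t / h t ≤ L)
    (β : ℝ) (hβ : β < 0 ∨ 1 ≤ β) :
    ∀ t : ℝ, 0 < t →
      0 ≤ iteratedDeriv 2 (fun s : ℝ => h (s ^ β)) t ∧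
      (1 ≤ ((fun s : ℝ => h (s ^ β)) t * iteratedDeriv 2 (fun s : ℝ => h (s ^ β)) t +
              (deriv (fun s : ℝ => h (s ^ β)) t) ^ 2) /
            (deriv (fun s : ℝ => h (s ^ β)) t) ^ 2 ∧
        ((fun s : ℝ => h (s ^ β)) t * iteratedDeriv 2 (fun s : ℝ => h (s ^ β)) t +
              (deriv (fun s : ℝ => h (s ^ β)) t) ^ 2) /
            (deriv (fun s : ℝ => h (s ^ β)) t) ^ 2 ≤ 2 + |β - 1| / |β|) ∧
      (|β| ≤ t * |deriv (fun s : ℝ => h (s ^ β)) t| / h (t ^ β) ∧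
        t * |deriv (fun s : ℝ => h (s ^ β)) t| / h (t ^ β) ≤ L * |β|) := by
  have hβ0 : β ≠ 0 := by rcases hβ with hb | hb <;> [exact hb.ne; linarith]
  have hββ : 0 ≤ β * (β - 1) := by rcases hβ with hb | hb <;> nlinarith
  intro t ht
  have hs : 0 < t ^ β := Real.rpow_pos_of_pos ht β
  have hconvex : 0 ≤ t ^ 2 * iteratedDeriv 2 (fun s => h (s ^ β)) t := by
    rw [sq_mul_iteratedDeriv_two_comp_rpow ht hd1 (hd2 _ hs)]
    exact add_nonneg (mul_nonneg (mul_nonneg hββ hs.le) (hpos' _ hs).le)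
      (mul_nonneg (by positivity) (hpos'' _ hs).le)
  have hslope : 0 ≤ (β - 1) / β := by
    rw [← mul_div_mul_left _ _ hβ0, ← sq]
    positivity
  have hmean : 0 ≤ h (t ^ β) / (t ^ β * h' (t ^ β)) ∧ h (t ^ β) / (t ^ β * h' (t ^ β)) ≤ 1 := by
    rw [← inv_div]
    exact ⟨inv_nonneg.2 (zero_le_one.trans (hlow _ hs)), inv_le_one_of_one_le₀ (hlow _ hs)⟩
  have hcurv : 0 ≤ h (t ^ β) * h'' (t ^ β) / h' (t ^ β) ^ 2 ∧
      h (t ^ β) * h'' (t ^ β) / h' (t ^ β) ^ 2 ≤ 1 := by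
    exact ⟨div_nonneg (mul_pos (hpos _ hs) (hpos'' _ hs)).le (sq_nonneg _),
      div_le_one_of_le₀ (hup _ hs) (sq_nonneg _)⟩
  have hslope_le : (β - 1) / β ≤ |β - 1| / |β| := abs_div (β - 1) β ▸ le_abs_self _
  refine ⟨nonneg_of_mul_nonneg_right hconvex (by positivity), ?_, ?_⟩
  · rw [upsilon_div_sq_deriv_comp_rpow ht hβ0 hd1 (hd2 _ hs) (hpos' _ hs).ne']
    exact ⟨by linarith [mul_nonneg hslope hmean.1, hcurv.1],
      by linarith [mul_le_of_le_one_right hslope hmean.2, hcurv.2]⟩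
  · rw [mul_abs_deriv_comp_rpow_div ht (hd1 _ hs) (hpos' _ hs)]
    exact ⟨le_mul_of_one_le_right (abs_nonneg β) (hlow _ hs),
      mul_comm L _ ▸ mul_le_mul_of_nonneg_left (hhi _ hs) (abs_nonneg β)⟩

/-- Power composition estimates: if h > 0 is twice differentiable on (0,∞) with
h' > 0, h'' > 0, h h'' ≤ (h')², and 1 ≤ t h'/h ≤ L, then for β < 0 or β ≥ 1 the
function h_β(t) = h(t^β) is convex with 1 ≤ Υ_β/(h_β')² ≤ 2 + |β−1|/|β| and
|β| ≤ t |h_β'|/h_β ≤ L |β| on (0,∞). -/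
theorem power_composition_estimates (h h' h'' : ℝ → ℝ) (L : ℝ) (hL : 1 ≤ L)
    (hd1 : ∀ t : ℝ, 0 < t → HasDerivAt h (h' t) t)
    (hd2 : ∀ t : ℝ, 0 < t → HasDerivAt h' (h'' t) t)
    (hpos : ∀ t : ℝ, 0 < t → 0 < h t)
    (hpos' : ∀ t : ℝ, 0 < t → 0 < h' t)
    (hpos'' : ∀ t : ℝ, 0 < t → 0 < h'' t)
    (hup : ∀ t : ℝ, 0 < t → h t * h'' t ≤ (h' t) ^ 2)
    (hlow : ∀ t : ℝ, 0 < t → 1 ≤ t * h' t / h t)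
    (hhi : ∀ t : ℝ, 0 < t → t * h' t / h t ≤ L)
    (β : ℝ) (hβ : β < 0 ∨ 1 ≤ β) :
    ∀ t : ℝ, 0 < t →
      0 ≤ iteratedDeriv 2 (fun s : ℝ => h (s ^ β)) t ∧
      (1 ≤ ((fun s : ℝ => h (s ^ β)) t * iteratedDeriv 2 (fun s : ℝ => h (s ^ β)) t +
              (deriv (fun s : ℝ => h (s ^ β)) t) ^ 2) /
            (deriv (fun s : ℝ => h (s ^ β)) t) ^ 2 ∧
        ((fun s : ℝ => h (s ^ β)) t * iteratedDeriv 2 (fun s : ℝ => h (s ^ β)) t +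
              (deriv (fun s : ℝ => h (s ^ β)) t) ^ 2) /
            (deriv (fun s : ℝ => h (s ^ β)) t) ^ 2 ≤ 2 + |β - 1| / |β|) ∧
      (|β| ≤ t * |deriv (fun s : ℝ => h (s ^ β)) t| / h (t ^ β) ∧
        t * |deriv (fun s : ℝ => h (s ^ β)) t| / h (t ^ β) ≤ L * |β|) :=
  power_composition_estimates_general h h' h'' L hd1 hd2 hpos hpos' hpos'' hup hlow hhi β hβ
end
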